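/- arXiv:0712.0522 — 6 statements merged into one kernel-verified Lean document; each statement's English description precedes it below -/
import Mathlib

section
/- Let R > 1, r = 1/R, and φ ∈ ℝ. Then (R² − r²)/(2π) · ∫_0^{2π} 1/((R² + r² − R − r) + ((R + r + 2)/4)(2 − 2cos(θ − φ))) dθ = √((R² + 2R + 1)/(R² + R + 1)). -/
open Real

/-!
With `a = R² + r² - R - r + (R + r + 2)/2` and `b = (R + r + 2)/2` the denominator is
`a - b cos (θ - φ)`, so by periodicity the integral is the classical
`∫₀^{2π} dθ / (a - b cos θ) = 2π / √(a² - b²)`. Since `rR = 1`, `a - b = (R - 1)²(R² + R + 1)/R²`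
and `a + b = (R² + 1)²/R²`, and the prefactor `R² - r²` turns `2π / √(a² - b²)` into the stated
square root.
-/

section CosineIntegral

variable {a b : ℝ}

lemma sub_mul_cos_pos (hab : |b| < a) (θ : ℝ) : 0 < a - b * cos θ := by
  have hbcos : b * cos θ ≤ |b| :=
    calc b * cos θ ≤ |b * cos θ| := le_abs_self _
      _ = |b| * |cos θ| := abs_mul _ _
      _ ≤ |b| := mul_le_of_le_one_right (abs_nonneg b) (abs_cos_le_one θ)
  linarith

lemma sq_sub_sq_pos_of_abs_lt (hab : |b| < a) : 0 < a ^ 2 - b ^ 2 := by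
  nlinarith [abs_nonneg b, sq_abs b]

/-- With `k = √(a² - b²)`, this differs from the Weierstrass-substitution antiderivative
`(2/k) arctan ((a + b) tan (θ/2) / k)` by a locally constant function, but it is continuous on all
of `ℝ` and its arctangent term vanishes at `0` and `2π`. -/
lemma hasDerivAt_inv_sub_mul_cos_antideriv (hab : |b| < a) (θ : ℝ) :
    HasDerivAt
      (fun θ => (θ + 2 * arctan (b * sin θ / (a + √(a ^ 2 - b ^ 2) - b * cos θ))) / √(a ^ 2 - b ^ 2))
      (1 / (a - b * cos θ)) θ := by
  set k := √(a ^ 2 - b ^ 2)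
  have hk2 : k ^ 2 = a ^ 2 - b ^ 2 := sq_sqrt (sq_sub_sq_pos_of_abs_lt hab).le
  have hk : 0 < k := sqrt_pos.2 (sq_sub_sq_pos_of_abs_lt hab)
  have hden : 0 < a - b * cos θ := sub_mul_cos_pos hab θ
  have hD : 0 < a + k - b * cos θ := by linarith
  have hnum : HasDerivAt (fun θ => b * sin θ) (b * cos θ) θ := (hasDerivAt_sin θ).const_mul b
  have hdenom : HasDerivAt (fun θ => a + k - b * cos θ) (b * sin θ) θ := by
    simpa using ((hasDerivAt_cos θ).const_mul b).const_sub (a + k)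
  refine (((hasDerivAt_id θ).add ((hnum.div hdenom hD.ne').arctan.const_mul 2)).div_const k
    ).congr_deriv ?_
  have hs := sin_sq_add_cos_sq θ
  simp only [Pi.div_apply]
  field_simp
  linear_combination -(a + k - b * cos θ) * (hk2 + b ^ 2 * hs)

lemma integral_one_div_sub_mul_cos (hab : |b| < a) :
    ∫ θ in (0 : ℝ)..(2 * π), 1 / (a - b * cos θ) = 2 * π / √(a ^ 2 - b ^ 2) := by
  have hcont : Continuous fun θ => 1 / (a - b * cos θ) :=
    continuous_const.div (by fun_prop) fun θ => (sub_mul_cos_pos hab θ).ne'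
  rw [intervalIntegral.integral_eq_sub_of_hasDerivAt
    (fun θ _ => hasDerivAt_inv_sub_mul_cos_antideriv hab θ) (hcont.intervalIntegrable _ _)]
  simp

lemma integral_one_div_sub_mul_cos_sub (hab : |b| < a) (φ : ℝ) :
    ∫ θ in (0 : ℝ)..(2 * π), 1 / (a - b * cos (θ - φ)) = 2 * π / √(a ^ 2 - b ^ 2) := by
  have hper : Function.Periodic (fun θ => 1 / (a - b * cos θ)) (2 * π) :=
    cos_periodic.comp fun x => 1 / (a - b * x)
  rw [intervalIntegral.integral_comp_sub_right (fun θ => 1 / (a - b * cos θ)), zero_sub,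
    sub_eq_neg_add, hper.intervalIntegral_add_eq (-φ) 0, zero_add, integral_one_div_sub_mul_cos hab]

end CosineIntegral

theorem stmt_3 (R : ℝ) (hR : 1 < R) (r : ℝ) (hr : r = 1 / R) (φ : ℝ) :
    (R ^ 2 - r ^ 2) / (2 * π) *
      ∫ θ in (0 : ℝ)..(2 * π),
        1 / ((R ^ 2 + r ^ 2 - R - r) + ((R + r + 2) / 4) * (2 - 2 * Real.cos (θ - φ))) =
      Real.sqrt ((R ^ 2 + 2 * R + 1) / (R ^ 2 + R + 1)) := by
  subst hr
  have hR0 : 0 < R := by linarith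
  have hR1 : R - 1 ≠ 0 := by linarith
  set a := R ^ 2 + (1 / R) ^ 2 - R - 1 / R + (R + 1 / R + 2) / 2 with ha
  set b := (R + 1 / R + 2) / 2 with hb
  have hsub : a - b = (R - 1) ^ 2 * (R ^ 2 + R + 1) / R ^ 2 := by rw [ha, hb]; field_simp; ring
  have hadd : a + b = (R ^ 2 + 1) ^ 2 / R ^ 2 := by rw [ha, hb]; field_simp; ring
  have hsub_pos : 0 < a - b := by rw [hsub]; positivity
  have hadd_pos : 0 < a + b := by rw [hadd]; positivity
  have hab : |b| < a := abs_lt.2 ⟨by linarith, by linarith⟩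
  have hden : ∀ θ, R ^ 2 + (1 / R) ^ 2 - R - 1 / R + (R + 1 / R + 2) / 4 * (2 - 2 * cos (θ - φ))
      = a - b * cos (θ - φ) := fun θ => by rw [ha, hb]; ring
  have hratio : (R ^ 2 - (1 / R) ^ 2) ^ 2 / (a ^ 2 - b ^ 2)
      = (R ^ 2 + 2 * R + 1) / (R ^ 2 + R + 1) := by
    rw [sq_sub_sq a b, hadd, hsub]
    field_simp
    ring
  have hnum : 0 < R ^ 2 - (1 / R) ^ 2 := by
    have : 1 / R < 1 := (div_lt_one hR0).2 hR
    nlinarith [one_div_pos.2 hR0]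
  simp_rw [hden, integral_one_div_sub_mul_cos_sub hab]
  rw [← hratio, sqrt_div' _ (sq_sub_sq_pos_of_abs_lt hab).le, sqrt_sq hnum.le]
  field_simp
end

section
/- Let H be a complex Hilbert space, A a bounded operator on H, R > 0 with ‖A‖ < R, and set r = 1/R. For every θ ∈ ℝ, the self-adjoint operator μ(θ,A) := (1/(4π))·((1 + e^{−iθ}rA)(1 − e^{−iθ}rA)⁻¹ + (1 + e^{iθ}rA*)(1 − e^{iθ}rA*)⁻¹) is positive semidefinite. -/
/-!
For a contraction `B` with `1 - B` invertible, substituting `z = (1 - B) y` gives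
`re ⟪(1 + B)(1 - B)⁻¹ z, z⟫ = ‖y‖² - ‖B y‖² ≥ 0`, so `T + T*` is positive for
`T = (1 + B)(1 - B)⁻¹`. Taking `B = e^{-iθ} r A`, a contraction since `r ‖A‖ < 1`, the
second summand of `μ(θ, A)` is exactly `T*`, and `μ(θ, A) = (4π)⁻¹ (T + T*)`.
-/

open Complex

/-- The operator-valued density `μ(θ, A)` from the decomposition lemma. -/
noncomputable def muOp {H : Type*} [NormedAddCommGroup H] [InnerProductSpace ℂ H]
    [CompleteSpace H] (r θ : ℝ) (A : H →L[ℂ] H) : H →L[ℂ] H :=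
  (((4 * Real.pi : ℝ) : ℂ))⁻¹ •
    ((1 + Complex.exp (-(θ : ℂ) * Complex.I) • (r : ℂ) • A) *
        Ring.inverse (1 - Complex.exp (-(θ : ℂ) * Complex.I) • (r : ℂ) • A) +
      (1 + Complex.exp ((θ : ℂ) * Complex.I) • (r : ℂ) • ContinuousLinearMap.adjoint A) *
        Ring.inverse
          (1 - Complex.exp ((θ : ℂ) * Complex.I) • (r : ℂ) • ContinuousLinearMap.adjoint A))

open scoped InnerProductSpace
open ContinuousLinearMap RCLike

theorem Commute.ringInverse_right {M₀ : Type*} [MonoidWithZero M₀] {a b : M₀}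
    (h : Commute a b) : Commute a (Ring.inverse b) := by
  by_cases hb : IsUnit b
  · obtain ⟨u, rfl⟩ := hb
    rw [Ring.inverse_unit]
    exact h.units_inv_right
  · rw [Ring.inverse_non_unit b hb]
    exact Commute.zero_right a

theorem star_one_add_mul_ringInverse_one_sub {R : Type*} [Ring R] [StarRing R] (b : R) :
    star ((1 + b) * Ring.inverse (1 - b)) = (1 + star b) * Ring.inverse (1 - star b) := by
  have hcomm : Commute (1 + star b) (1 - star b) := by
    simp only [Commute, SemiconjBy]; noncomm_ring
  rw [star_mul, ← Ring.inverse_star, star_sub, star_add, star_one]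
  exact hcomm.ringInverse_right.eq.symm

section

variable {𝕜 H : Type*} [RCLike 𝕜] [NormedAddCommGroup H] [InnerProductSpace 𝕜 H]

theorem re_inner_one_add_apply_one_sub_apply (B : H →L[𝕜] H) (y : H) :
    re ⟪(1 + B) y, (1 - B) y⟫_𝕜 = ‖y‖ ^ 2 - ‖B y‖ ^ 2 := by
  simp only [add_apply, sub_apply, one_apply_eq_self, inner_add_left, inner_sub_right,
    map_add, map_sub, inner_self_eq_norm_sq]
  rw [inner_re_symm (B y) y]
  ring

theorem re_inner_one_add_mul_ringInverse_one_sub_apply_nonneg (B : H →L[𝕜] H)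
    (hB : ‖B‖ ≤ 1) (z : H) : 0 ≤ re ⟪((1 + B) * Ring.inverse (1 - B)) z, z⟫_𝕜 := by
  by_cases hu : IsUnit (1 - B)
  · obtain ⟨u, hu⟩ := hu
    obtain ⟨y, rfl⟩ : ∃ y, z = (1 - B) y :=
      ⟨(↑u⁻¹ : H →L[𝕜] H) z, by
        rw [← hu, ← mul_apply_eq_comp, Units.mul_inv, one_apply_eq_self]⟩
    have hBy : ‖B y‖ ≤ ‖y‖ := (B.le_of_opNorm_le hB y).trans_eq (one_mul _)
    have hy : (↑u⁻¹ : H →L[𝕜] H) ((u : H →L[𝕜] H) y) = y := by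
      rw [← mul_apply_eq_comp, Units.inv_mul, one_apply_eq_self]
    rw [← hu, Ring.inverse_unit, mul_apply_eq_comp, hy, hu, re_inner_one_add_apply_one_sub_apply]
    nlinarith [norm_nonneg (B y)]
  · -- off the units `Ring.inverse` is `0`, so the operator vanishes
    simp [Ring.inverse_non_unit _ hu]

variable [CompleteSpace H]

theorem isPositive_add_star_of_re_inner_nonneg (T : H →L[𝕜] H)
    (hT : ∀ x, 0 ≤ re ⟪T x, x⟫_𝕜) : (T + star T).IsPositive := by
  refine isPositive_def'.mpr ⟨?_, fun x => ?_⟩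
  · rw [IsSelfAdjoint, star_add, star_star, add_comm]
  · rw [reApplyInnerSelf, add_apply, inner_add_left, map_add, star_eq_adjoint,
      adjoint_inner_left, inner_re_symm x]
    exact add_nonneg (hT x) (hT x)

theorem isPositive_one_add_mul_ringInverse_one_sub_add_star (B : H →L[𝕜] H)
    (hB : ‖B‖ ≤ 1) :
    ((1 + B) * Ring.inverse (1 - B) + (1 + star B) * Ring.inverse (1 - star B)).IsPositive := by
  rw [← star_one_add_mul_ringInverse_one_sub]
  exact isPositive_add_star_of_re_inner_nonneg _
    (re_inner_one_add_mul_ringInverse_one_sub_apply_nonneg B hB)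

end

theorem stmt_4_general {H : Type*} [NormedAddCommGroup H] [InnerProductSpace ℂ H] [CompleteSpace H]
    (A : H →L[ℂ] H) (R : ℝ) (hA : ‖A‖ < R) (r : ℝ) (hr : r = 1 / R) (θ : ℝ) :
    (muOp r θ A).IsPositive := by
  set B : H →L[ℂ] H := exp (-(θ : ℂ) * I) • (r : ℂ) • A
  have hr_nonneg : 0 ≤ r := by rw [hr]; exact one_div_nonneg.mpr ((norm_nonneg A).trans hA.le)
  have hB : ‖B‖ ≤ 1 := by
    have hR : 0 < R := (norm_nonneg A).trans_lt hA
    rw [norm_smul, norm_smul, show -(θ : ℂ) * I = ((-θ : ℝ) : ℂ) * I by push_cast; ring,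
      norm_exp_ofReal_mul_I, one_mul, norm_real, Real.norm_of_nonneg hr_nonneg, hr, one_div,
      inv_mul_le_iff₀ hR, mul_one]
    exact hA.le
  have hB_star : star B = exp ((θ : ℂ) * I) • (r : ℂ) • adjoint A := by
    rw [star_smul, star_smul, star_eq_adjoint]
    simp [← exp_conj]
  rw [muOp, ← hB_star]
  exact (isPositive_one_add_mul_ringInverse_one_sub_add_star B hB).smul_of_nonneg
    (by rw [← ofReal_inv]; exact zero_le_real.mpr (by positivity))

theorem stmt_4 {H : Type*} [NormedAddCommGroup H] [InnerProductSpace ℂ H] [CompleteSpace H]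
    (A : H →L[ℂ] H) (R : ℝ) (hR : 0 < R) (hA : ‖A‖ < R) (r : ℝ) (hr : r = 1 / R) (θ : ℝ) :
    (muOp r θ A).IsPositive :=
  stmt_4_general A R hA r hr θ
end

section
/- The limit as R → 1⁺ of the infinite product ∏_{n=1}^{∞} (1 − (R² − R⁻²)²/(R^{4n} − R^{−4n})²)⁻¹ equals ∏_{n=1}^{∞} (1 − 1/(4n²))⁻¹ = π/2. -/
open Real Filter

/-! Put `φₖ(x) = xᵏ - x⁻ᵏ`. For `x ≥ 1` the inequality `m φ₁(x) ≤ φₘ(x)` bounds the ratio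
`φ₂(R)/φ₄ₙ(R)` by `1/(2n)`, so each factor lies between `1` and the Wallis factor
`(1 - 1/(4n²))⁻¹`; comparing derivatives at `1` shows that the ratio tends to `1/(2n)` as `R → 1`.
Passing to logarithms, Tannery's theorem (dominated convergence for series), with the Wallis
product as dominating sequence, gives the limit of the infinite product. -/

open Topology Finset

namespace Real

theorem hasSum_log_of_tendsto_prod_range {f : ℕ → ℝ} {a : ℝ} (hf : ∀ i, 1 ≤ f i) (ha : 0 < a)
    (h : Tendsto (fun n => ∏ i ∈ range n, f i) atTop (𝓝 a)) :
    HasSum (fun i => log (f i)) (log a) := by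
  refine (hasSum_iff_tendsto_nat_of_nonneg (fun i => log_nonneg (hf i)) _).2 ?_
  refine ((continuousAt_log ha.ne').tendsto.comp h).congr fun n => ?_
  exact log_prod fun i _ => (zero_lt_one.trans_le (hf i)).ne'

theorem tendsto_tprod_of_dominated_convergence {α β : Type*} {𝓕 : Filter α} [𝓕.NeBot]
    {f : α → β → ℝ} {g : β → ℝ} (hg : Summable fun k => log (g k))
    (hlim : ∀ k, Tendsto (f · k) 𝓕 (𝓝 (g k)))
    (hbound : ∀ᶠ x in 𝓕, ∀ k, 1 ≤ f x k ∧ f x k ≤ g k) :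
    Tendsto (fun x => ∏' k, f x k) 𝓕 (𝓝 (∏' k, g k)) := by
  have hg_pos k : 0 < g k :=
    zero_lt_one.trans_le (ge_of_tendsto (hlim k) (hbound.mono fun x hx => (hx k).1))
  have hlog_le : ∀ᶠ x in 𝓕, ∀ k, 0 ≤ log (f x k) ∧ log (f x k) ≤ log (g k) :=
    hbound.mono fun x hx k =>
      ⟨log_nonneg (hx k).1, log_le_log (zero_lt_one.trans_le (hx k).1) (hx k).2⟩
  have hlog : Tendsto (fun x => ∑' k, log (f x k)) 𝓕 (𝓝 (∑' k, log (g k))) :=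
    tendsto_tsum_of_dominated_convergence hg
      (fun k => ((continuousAt_log (hg_pos k).ne').tendsto.comp (hlim k)))
      (hlog_le.mono fun x hx k => by rw [norm_of_nonneg (hx k).1]; exact (hx k).2)
  rw [← rexp_tsum_eq_tprod hg_pos hg]
  refine ((continuous_exp.tendsto _).comp hlog).congr' ?_
  filter_upwards [hbound, hlog_le] with x hx hx_log
  exact rexp_tsum_eq_tprod (fun k => zero_lt_one.trans_le (hx k).1)
    (hg.of_nonneg_of_le (fun k => (hx_log k).1) (fun k => (hx_log k).2))

end Real

noncomputable def powSubInv (k : ℕ) (x : ℝ) : ℝ := x ^ k - (x ^ k)⁻¹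

theorem powSubInv_one (k : ℕ) : powSubInv k 1 = 0 := by simp [powSubInv]

theorem powSubInv_mul (j k : ℕ) (x : ℝ) : powSubInv (j * k) x = powSubInv k (x ^ j) := by
  simp only [powSubInv, pow_mul]

theorem powSubInv_pos {k : ℕ} {x : ℝ} (hk : k ≠ 0) (hx : 1 < x) : 0 < powSubInv k x := by
  have h := one_lt_pow₀ hx hk
  exact sub_pos.2 ((inv_lt_one_of_one_lt₀ h).trans h)

theorem hasDerivAt_powSubInv (k : ℕ) : HasDerivAt (powSubInv k) (2 * k) 1 := by
  have h : HasDerivAt (fun x : ℝ => x ^ k - (x ^ k)⁻¹)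
      (k * 1 ^ (k - 1) - -(k * 1 ^ (k - 1)) / (1 ^ k) ^ 2) 1 :=
    (hasDerivAt_pow k 1).sub ((hasDerivAt_pow k 1).inv (by simp))
  exact h.congr_deriv (by simp only [one_pow, mul_one, div_one]; ring)

theorem tendsto_powSubInv_div (j : ℕ) {k : ℕ} (hk : k ≠ 0) :
    Tendsto (fun x => powSubInv j x / powSubInv k x) (𝓝[≠] 1) (𝓝 (j / k)) := by
  have hj := hasDerivAt_iff_tendsto_slope.1 (hasDerivAt_powSubInv j)
  have hk' := hasDerivAt_iff_tendsto_slope.1 (hasDerivAt_powSubInv k)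
  have hslope := hj.div hk' (by positivity)
  rw [mul_div_mul_left _ _ two_ne_zero] at hslope
  refine hslope.congr' ?_
  filter_upwards [self_mem_nhdsWithin] with x hx
  change slope (powSubInv j) 1 x / slope (powSubInv k) 1 x = _
  rw [slope_def_field, slope_def_field, powSubInv_one, powSubInv_one, sub_zero, sub_zero,
    div_div_div_cancel_right₀ (sub_ne_zero.2 hx)]

theorem nat_mul_powSubInv_le {x : ℝ} (hx : 1 ≤ x) (m : ℕ) : m * powSubInv 1 x ≤ powSubInv m x := by
  induction m with
  | zero => simp [powSubInv]
  | succ m ih =>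
    have hx0 : 0 < x := zero_lt_one.trans_le hx
    have hxm : 1 ≤ x ^ m := one_le_pow₀ hx
    have hsplit : powSubInv (m + 1) x - powSubInv m x - powSubInv 1 x =
        (x ^ m - 1) * (x - 1) * (1 - (x ^ m)⁻¹ * x⁻¹) := by
      simp only [powSubInv]
      field_simp
      ring
    have hsmall : (x ^ m)⁻¹ * x⁻¹ ≤ 1 :=
      mul_le_one₀ (inv_le_one_of_one_le₀ hxm) (by positivity) (inv_le_one_of_one_le₀ hx)
    have hsplit_nonneg : 0 ≤ (x ^ m - 1) * (x - 1) * (1 - (x ^ m)⁻¹ * x⁻¹) := by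
      apply mul_nonneg (mul_nonneg _ _) <;> linarith
    push_cast
    linarith

noncomputable def wallisFactor (n : ℕ) : ℝ := (1 - 1 / (4 * ((n : ℝ) + 1) ^ 2))⁻¹

theorem wallisFactor_eq (n : ℕ) : wallisFactor n = (1 - (1 / (2 * ((n : ℝ) + 1))) ^ 2)⁻¹ := by
  rw [wallisFactor, div_pow, mul_pow]
  norm_num

theorem tendsto_prod_range_wallisFactor :
    Tendsto (fun N => ∏ i ∈ range N, wallisFactor i) atTop (𝓝 (π / 2)) := by
  refine Real.tendsto_prod_pi_div_two.congr fun N => prod_congr rfl fun i _ => ?_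
  have h : 1 - 1 / (4 * ((i : ℝ) + 1) ^ 2) = (2 * i + 1) * (2 * i + 3) / (2 * i + 2) ^ 2 := by
    field_simp
    ring
  rw [wallisFactor, h, inv_div]
  field_simp

theorem inv_one_sub_sq_le_inv_one_sub_sq {s t : ℝ} (ht : 0 ≤ t) (hts : t ≤ s) (hs : s < 1) :
    (1 - t ^ 2)⁻¹ ≤ (1 - s ^ 2)⁻¹ :=
  inv_anti₀ (by nlinarith) (by nlinarith)

theorem one_div_two_mul_succ_lt_one (n : ℕ) : 1 / (2 * ((n : ℝ) + 1)) < 1 :=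
  (div_lt_one (by positivity)).2 (by linarith [n.cast_nonneg (α := ℝ)])

theorem one_le_wallisFactor (n : ℕ) : 1 ≤ wallisFactor n := by
  simpa [wallisFactor_eq] using
    inv_one_sub_sq_le_inv_one_sub_sq le_rfl (by positivity) (one_div_two_mul_succ_lt_one n)

theorem powSubInv_two_div_mem_Icc {R : ℝ} (hR : 1 < R) (n : ℕ) :
    powSubInv 2 R / powSubInv (4 * (n + 1)) R ∈ Set.Icc 0 (1 / (2 * ((n : ℝ) + 1))) := by
  have h2 : powSubInv 2 R = powSubInv 1 (R ^ 2) := powSubInv_mul 2 1 R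
  have h4 : powSubInv (4 * (n + 1)) R = powSubInv (2 * (n + 1)) (R ^ 2) := by
    rw [← powSubInv_mul]; ring_nf
  have hR2 : 1 < R ^ 2 := one_lt_pow₀ hR two_ne_zero
  have hpos := powSubInv_pos one_ne_zero hR2
  have hpos' := powSubInv_pos (by positivity : 2 * (n + 1) ≠ 0) hR2
  have hle := nat_mul_powSubInv_le hR2.le (2 * (n + 1))
  push_cast at hle
  rw [h2, h4]
  refine ⟨div_nonneg hpos.le hpos'.le, ?_⟩
  rw [div_le_div_iff₀ hpos' (by positivity)]
  linarith

theorem tendsto_powSubInv_two_div (n : ℕ) :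
    Tendsto (fun R => powSubInv 2 R / powSubInv (4 * (n + 1)) R) (𝓝[>] 1)
      (𝓝 (1 / (2 * ((n : ℝ) + 1)))) := by
  have hGT : 𝓝[>] (1 : ℝ) ≤ 𝓝[≠] 1 := nhdsWithin_mono 1 fun x (hx : 1 < x) => hx.ne'
  convert (tendsto_powSubInv_div 2 (k := 4 * (n + 1)) (by positivity)).mono_left hGT using 2
  push_cast
  field_simp
  ring

noncomputable def ratioFactor (n : ℕ) (R : ℝ) : ℝ :=
  (1 - (powSubInv 2 R / powSubInv (4 * (n + 1)) R) ^ 2)⁻¹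

theorem ratioFactor_mem_Icc {R : ℝ} (hR : 1 < R) (n : ℕ) :
    ratioFactor n R ∈ Set.Icc 1 (wallisFactor n) := by
  obtain ⟨h0, hs⟩ := powSubInv_two_div_mem_Icc hR n
  have hlt := one_div_two_mul_succ_lt_one n
  rw [ratioFactor, wallisFactor_eq]
  exact ⟨by simpa using inv_one_sub_sq_le_inv_one_sub_sq le_rfl h0 (hs.trans_lt hlt),
    inv_one_sub_sq_le_inv_one_sub_sq h0 hs hlt⟩

theorem tendsto_ratioFactor (n : ℕ) :
    Tendsto (ratioFactor n) (𝓝[>] 1) (𝓝 (wallisFactor n)) := by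
  have hne : 1 - (1 / (2 * ((n : ℝ) + 1))) ^ 2 ≠ 0 :=
    (sub_pos.2 (pow_lt_one₀ (by positivity) (one_div_two_mul_succ_lt_one n) two_ne_zero)).ne'
  rw [wallisFactor_eq]
  exact (tendsto_const_nhds.sub ((tendsto_powSubInv_two_div n).pow 2)).inv₀ hne

theorem stmt_8 :
    Filter.Tendsto
      (fun R : ℝ => ∏' n : ℕ,
        (1 - (R ^ 2 - (R ^ 2)⁻¹) ^ 2 / (R ^ (4 * (n + 1)) - (R ^ (4 * (n + 1)))⁻¹) ^ 2)⁻¹)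
      (nhdsWithin 1 (Set.Ioi 1)) (nhds (π / 2)) ∧
    (∏' n : ℕ, (1 - 1 / (4 * ((n : ℝ) + 1) ^ 2))⁻¹) = π / 2 := by
  have hwallis_pos n : 0 < wallisFactor n := zero_lt_one.trans_le (one_le_wallisFactor n)
  have hlog : HasSum (fun n => log (wallisFactor n)) (log (π / 2)) :=
    hasSum_log_of_tendsto_prod_range one_le_wallisFactor (by positivity)
      tendsto_prod_range_wallisFactor
  have hprod : ∏' n, wallisFactor n = π / 2 := by
    rw [← rexp_tsum_eq_tprod hwallis_pos hlog.summable, hlog.tsum_eq, exp_log (by positivity)]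
  refine ⟨?_, hprod⟩
  have hlim := tendsto_tprod_of_dominated_convergence hlog.summable tendsto_ratioFactor
    (eventually_mem_nhdsWithin.mono fun R hR n => ratioFactor_mem_Icc hR n)
  rw [hprod] at hlim
  simpa only [ratioFactor, powSubInv, div_pow] using hlim
end

section
/- For every real R > 1, the identity 2(1 − R⁻²)·∏_{n=1}^{∞}((1 − R^{−8n})/(1 − R^{4−8n}))² = (2/(1 + R⁻²))·∏_{n=1}^{∞}(1 − (R² − R⁻²)²/(R^{4n} − R^{−4n})²)⁻¹ holds, and in particular this quantity is strictly greater than 2/(1 + R⁻²). -/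
/-!
Put `q = R⁻²` and `t = q² = R⁻⁴`. The `n`-th factor of the left product is
`((1 - t^(2n+2)) / (1 - t^(2n+1)))²`, and that of the right product is
`(1 - t^(2n+2))² / ((1 - t^(2n+1)) (1 - t^(2n+3)))`; this is the identity
`sinh² a - sinh² b = sinh (a + b) sinh (a - b)` with `q = e^(-b)`, `t^(n+1) = e^(-a)`.
Their quotient `(1 - t^(2n+3)) / (1 - t^(2n+1))` telescopes to
`(1 - t)⁻¹ = (1 - q)⁻¹ (1 + q)⁻¹`, which gives the identity. Each right-hand factor exceeds `1`
because `k ↦ 1 - t^k` is strictly log-concave: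
`(1 - t^(k+1))² - (1 - t^k)(1 - t^(k+2)) = t^k (1 - t)²`.
-/

open Filter Topology Finset

namespace Real

variable {ι : Type*} {f : ι → ℝ}

theorem multipliable_of_summable_sub_one (hf : Summable fun i ↦ f i - 1) : Multipliable f := by
  simpa using Real.multipliable_one_add_of_summable hf

theorem one_lt_tprod_of_summable_sub_one (hf : Summable fun i ↦ f i - 1) (h1 : ∀ i, 1 ≤ f i)
    (i : ι) (hi : 1 < f i) : 1 < ∏' i, f i := by
  have hlog : Summable fun i ↦ log (f i) := by
    simpa using summable_log_one_add_of_summable hf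
  rw [← rexp_tsum_eq_tprod (fun i ↦ one_pos.trans_le (h1 i)) hlog, one_lt_exp_iff]
  exact hlog.tsum_pos (fun i ↦ log_nonneg (h1 i)) i (log_pos hi)

end Real

theorem summable_sub_one_of_le_geometric {f : ℕ → ℝ} {K t : ℝ} (ht0 : 0 ≤ t) (ht1 : t < 1)
    (h1 : ∀ n, 1 ≤ f n) (hle : ∀ n, f n - 1 ≤ K * t ^ n) : Summable fun n ↦ f n - 1 :=
  ((summable_geometric_of_lt_one ht0 ht1).mul_left K).of_nonneg_of_le
    (fun n ↦ sub_nonneg.mpr (h1 n)) hle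

section

variable {t : ℝ}

noncomputable def oddRatio (t : ℝ) (n : ℕ) : ℝ :=
  (1 - t ^ (2 * n + 3)) / (1 - t ^ (2 * n + 1))

noncomputable def logConcavityRatio (t : ℝ) (n : ℕ) : ℝ :=
  (1 - t ^ (2 * n + 2)) ^ 2 / ((1 - t ^ (2 * n + 1)) * (1 - t ^ (2 * n + 3)))

theorem one_sub_pow_pos (ht0 : 0 ≤ t) (ht1 : t < 1) {k : ℕ} (hk : k ≠ 0) : 0 < 1 - t ^ k :=
  sub_pos.mpr (pow_lt_one₀ ht0 ht1 hk)

theorem one_sub_le_one_sub_pow (ht0 : 0 ≤ t) (ht1 : t < 1) {k : ℕ} (hk : k ≠ 0) :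
    1 - t ≤ 1 - t ^ k :=
  sub_le_sub_left (pow_le_of_le_one ht0 ht1.le hk) 1

theorem one_le_oddRatio (ht0 : 0 ≤ t) (ht1 : t < 1) (n : ℕ) : 1 ≤ oddRatio t n := by
  rw [oddRatio, one_le_div (one_sub_pow_pos ht0 ht1 (by omega))]
  gcongr 1 - ?_
  exact pow_le_pow_of_le_one ht0 ht1.le (by omega)

theorem oddRatio_sub_one_le (ht0 : 0 ≤ t) (ht1 : t < 1) (n : ℕ) :
    oddRatio t n - 1 ≤ (1 - t)⁻¹ * t ^ n := by
  have hden := one_sub_pow_pos ht0 ht1 (k := 2 * n + 1) (by omega)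
  calc oddRatio t n - 1 = (t ^ (2 * n + 1) - t ^ (2 * n + 3)) / (1 - t ^ (2 * n + 1)) := by
        rw [oddRatio, div_sub_one hden.ne']
        ring
    _ ≤ t ^ n / (1 - t) :=
        div_le_div₀ (by positivity) ((sub_le_self _ (by positivity)).trans
          (pow_le_pow_of_le_one ht0 ht1.le (by omega))) (sub_pos.mpr ht1)
          (one_sub_le_one_sub_pow ht0 ht1 (by omega))
    _ = (1 - t)⁻¹ * t ^ n := by rw [inv_mul_eq_div]

theorem hasProd_oddRatio (ht0 : 0 ≤ t) (ht1 : t < 1) : HasProd (oddRatio t) (1 - t)⁻¹ := by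
  have hmul : Multipliable (oddRatio t) := Real.multipliable_of_summable_sub_one <|
    summable_sub_one_of_le_geometric ht0 ht1 (one_le_oddRatio ht0 ht1) (oddRatio_sub_one_le ht0 ht1)
  have hpartial (N : ℕ) : ∏ n ∈ range N, oddRatio t n = (1 - t ^ (2 * N + 1)) / (1 - t) := by
    induction N with
    | zero => simp [(sub_pos.mpr ht1).ne']
    | succ N ih =>
      rw [prod_range_succ, ih, oddRatio, mul_comm,
        div_mul_div_cancel₀ (one_sub_pow_pos ht0 ht1 (by omega)).ne']
      ring_nf
  have hlim : Tendsto (fun N : ℕ ↦ t ^ (2 * N + 1)) atTop (𝓝 0) :=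
    (tendsto_pow_atTop_nhds_zero_of_lt_one ht0 ht1).comp
      (tendsto_atTop_mono (fun N ↦ by dsimp only [id]; omega) tendsto_id)
  rw [hmul.hasProd_iff_tendsto_nat, funext hpartial]
  simpa using (tendsto_const_nhds (x := (1 : ℝ)) |>.sub hlim).div_const (1 - t)

theorem logConcavityRatio_sub_one (ht0 : 0 ≤ t) (ht1 : t < 1) (n : ℕ) :
    logConcavityRatio t n - 1 =
      t ^ (2 * n + 1) * (1 - t) ^ 2 / ((1 - t ^ (2 * n + 1)) * (1 - t ^ (2 * n + 3))) := by
  have h1 := (one_sub_pow_pos ht0 ht1 (k := 2 * n + 1) (by omega)).ne'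
  have h3 := (one_sub_pow_pos ht0 ht1 (k := 2 * n + 3) (by omega)).ne'
  rw [logConcavityRatio]
  field_simp
  ring

theorem one_lt_logConcavityRatio (ht0 : 0 < t) (ht1 : t < 1) (n : ℕ) :
    1 < logConcavityRatio t n := by
  have := one_sub_pow_pos ht0.le ht1 (k := 2 * n + 1) (by omega)
  have := one_sub_pow_pos ht0.le ht1 (k := 2 * n + 3) (by omega)
  have := sub_pos.mpr ht1
  rw [← sub_pos, logConcavityRatio_sub_one ht0.le ht1]
  positivity

theorem logConcavityRatio_sub_one_le (ht0 : 0 ≤ t) (ht1 : t < 1) (n : ℕ) :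
    logConcavityRatio t n - 1 ≤ t ^ n := by
  have hpos := sub_pos.mpr ht1
  rw [logConcavityRatio_sub_one ht0 ht1]
  calc t ^ (2 * n + 1) * (1 - t) ^ 2 / ((1 - t ^ (2 * n + 1)) * (1 - t ^ (2 * n + 3)))
      ≤ t ^ (2 * n + 1) * (1 - t) ^ 2 / ((1 - t) * (1 - t)) := by
        refine div_le_div_of_nonneg_left (by positivity) (by positivity)
          (mul_le_mul ?_ ?_ hpos.le ?_)
        · exact one_sub_le_one_sub_pow ht0 ht1 (by omega)
        · exact one_sub_le_one_sub_pow ht0 ht1 (by omega)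
        · exact (one_sub_pow_pos ht0 ht1 (by omega)).le
    _ = t ^ (2 * n + 1) := by field_simp
    _ ≤ t ^ n := pow_le_pow_of_le_one ht0 ht1.le (by omega)

theorem sq_ratio_eq_logConcavityRatio_mul_oddRatio (ht0 : 0 ≤ t) (ht1 : t < 1) (n : ℕ) :
    ((1 - t ^ (2 * n + 2)) / (1 - t ^ (2 * n + 1))) ^ 2 =
      logConcavityRatio t n * oddRatio t n := by
  have := (one_sub_pow_pos ht0 ht1 (k := 2 * n + 1) (by omega)).ne'
  have := (one_sub_pow_pos ht0 ht1 (k := 2 * n + 3) (by omega)).ne'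
  rw [logConcavityRatio, oddRatio]
  field_simp

theorem summable_logConcavityRatio_sub_one (ht0 : 0 < t) (ht1 : t < 1) :
    Summable fun n ↦ logConcavityRatio t n - 1 :=
  summable_sub_one_of_le_geometric (K := 1) ht0.le ht1
    (fun n ↦ (one_lt_logConcavityRatio ht0 ht1 n).le)
    (fun n ↦ by simpa using logConcavityRatio_sub_one_le ht0.le ht1 n)

theorem one_lt_tprod_logConcavityRatio (ht0 : 0 < t) (ht1 : t < 1) :
    1 < ∏' n, logConcavityRatio t n :=
  Real.one_lt_tprod_of_summable_sub_one (summable_logConcavityRatio_sub_one ht0 ht1)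
    (fun n ↦ (one_lt_logConcavityRatio ht0 ht1 n).le) 0 (one_lt_logConcavityRatio ht0 ht1 0)

theorem tprod_sq_ratio (ht0 : 0 < t) (ht1 : t < 1) :
    ∏' n : ℕ, ((1 - t ^ (2 * n + 2)) / (1 - t ^ (2 * n + 1))) ^ 2 =
      (∏' n, logConcavityRatio t n) * (1 - t)⁻¹ := by
  simp_rw [sq_ratio_eq_logConcavityRatio_mul_oddRatio ht0.le ht1]
  have hodd := hasProd_oddRatio ht0.le ht1
  rw [(Real.multipliable_of_summable_sub_one (summable_logConcavityRatio_sub_one ht0 ht1)).tprod_mul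
    hodd.multipliable, hodd.tprod_eq]

end

theorem one_sub_sq_div_sq_inv_sub {K : Type*} [Field K] {q v : K} (hq : q ≠ 0) (hv : v ≠ 0)
    (hv1 : 1 - v ^ 2 ≠ 0) :
    1 - (q⁻¹ - q) ^ 2 / (v⁻¹ - v) ^ 2 =
      (1 - v ^ 2 / q ^ 2) * (1 - v ^ 2 * q ^ 2) / (1 - v ^ 2) ^ 2 := by
  rw [show v⁻¹ - v = (1 - v ^ 2) / v by field_simp]
  field_simp
  ring

theorem inv_one_sub_eq_logConcavityRatio {q : ℝ} (hq0 : 0 < q) (hq1 : q < 1) (n : ℕ) :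
    (1 - (q⁻¹ - q) ^ 2 / (((q ^ 2) ^ (n + 1))⁻¹ - (q ^ 2) ^ (n + 1)) ^ 2)⁻¹ =
      logConcavityRatio (q ^ 2) n := by
  have ht0 : 0 ≤ q ^ 2 := by positivity
  have ht1 : q ^ 2 < 1 := pow_lt_one₀ hq0.le hq1 two_ne_zero
  have hsq : ((q ^ 2) ^ (n + 1)) ^ 2 = (q ^ 2) ^ (2 * n + 2) := by rw [← pow_mul]; ring_nf
  have hv := (one_sub_pow_pos ht0 ht1 (k := 2 * n + 2) (by omega)).ne'
  rw [one_sub_sq_div_sq_inv_sub hq0.ne' (by positivity) (hsq ▸ hv), hsq, inv_div,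
    pow_succ _ (2 * n + 1), mul_div_cancel_right₀ _ (by positivity), ← pow_succ, ← pow_succ,
    logConcavityRatio]

theorem one_sub_inv_pow_div_eq {R : ℝ} (hR : R ≠ 0) (n : ℕ) :
    (1 - (R ^ (8 * (n + 1)))⁻¹) / (1 - R ^ 4 * (R ^ (8 * (n + 1)))⁻¹) =
      (1 - ((R ^ 2)⁻¹ ^ 2) ^ (2 * n + 2)) / (1 - ((R ^ 2)⁻¹ ^ 2) ^ (2 * n + 1)) := by
  have h8 : (R ^ (8 * (n + 1)))⁻¹ = ((R ^ 2)⁻¹ ^ 2) ^ (2 * n + 2) := by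
    rw [inv_pow, inv_pow, ← pow_mul, ← pow_mul]
    ring_nf
  have h4 : R ^ 4 * (R ^ (8 * (n + 1)))⁻¹ = ((R ^ 2)⁻¹ ^ 2) ^ (2 * n + 1) := by
    rw [inv_pow, inv_pow, ← pow_mul, ← pow_mul]
    field_simp
    ring_nf
  rw [h4, h8]

theorem inv_one_sub_sq_div_sq_eq (R : ℝ) (n : ℕ) :
    (1 - (R ^ 2 - (R ^ 2)⁻¹) ^ 2 / (R ^ (4 * (n + 1)) - (R ^ (4 * (n + 1)))⁻¹) ^ 2)⁻¹ =
      (1 - (((R ^ 2)⁻¹)⁻¹ - (R ^ 2)⁻¹) ^ 2 /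
        ((((R ^ 2)⁻¹ ^ 2) ^ (n + 1))⁻¹ - ((R ^ 2)⁻¹ ^ 2) ^ (n + 1)) ^ 2)⁻¹ := by
  rw [inv_inv, inv_pow, inv_pow, inv_inv, ← pow_mul, ← pow_mul]
  ring_nf

theorem stmt_9 (R : ℝ) (hR : 1 < R) :
    (2 * (1 - (R ^ 2)⁻¹) *
        ∏' n : ℕ, ((1 - (R ^ (8 * (n + 1)))⁻¹) / (1 - R ^ 4 * (R ^ (8 * (n + 1)))⁻¹)) ^ 2 =
      (2 / (1 + (R ^ 2)⁻¹)) *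
        ∏' n : ℕ,
          (1 - (R ^ 2 - (R ^ 2)⁻¹) ^ 2 / (R ^ (4 * (n + 1)) - (R ^ (4 * (n + 1)))⁻¹) ^ 2)⁻¹) ∧
    2 / (1 + (R ^ 2)⁻¹) <
      2 * (1 - (R ^ 2)⁻¹) *
        ∏' n : ℕ, ((1 - (R ^ (8 * (n + 1)))⁻¹) / (1 - R ^ 4 * (R ^ (8 * (n + 1)))⁻¹)) ^ 2 := by
  have hq0 : 0 < (R ^ 2)⁻¹ := by positivity
  have hq1 : (R ^ 2)⁻¹ < 1 := inv_lt_one_of_one_lt₀ (one_lt_pow₀ hR two_ne_zero)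
  simp_rw [one_sub_inv_pow_div_eq (by positivity : R ≠ 0), inv_one_sub_sq_div_sq_eq]
  generalize (R ^ 2)⁻¹ = q at hq0 hq1 ⊢
  have ht0 : 0 < q ^ 2 := by positivity
  have ht1 : q ^ 2 < 1 := pow_lt_one₀ hq0.le hq1 two_ne_zero
  have hpre : 2 * (1 - q) * (1 - q ^ 2)⁻¹ = 2 / (1 + q) := by
    rw [show 1 - q ^ 2 = (1 + q) * (1 - q) by ring, ← div_eq_mul_inv,
      mul_div_mul_right _ _ (sub_pos.mpr hq1).ne']
  simp_rw [inv_one_sub_eq_logConcavityRatio hq0 hq1, tprod_sq_ratio ht0 ht1, ← hpre]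
  refine ⟨by ring, ?_⟩
  rw [mul_comm (∏' n, _), ← mul_assoc]
  exact lt_mul_of_one_lt_right (by positivity) (one_lt_tprod_logConcavityRatio ht0 ht1)
end

section
/- Let H be a complex Hilbert space and A ∈ L(H) with ‖A‖ < R, r = 1/R. Then ∫_0^{2π} μ(θ, A) dθ = I (the identity operator), where μ(θ,A) = (1/(4π))·((1 + e^{−iθ}rA)(1 − e^{−iθ}rA)⁻¹ + (1 + e^{iθ}rA*)(1 − e^{iθ}rA*)⁻¹). -/
open Complex

/-!
Expanding `(1 - e^{ikθ} D)⁻¹ = ∑ₙ e^{iknθ} Dⁿ` (valid since `‖D‖ < 1`) and integrating term by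
term over a period, only the constant term survives, so the resolvent integrates to `2π`. Since
`(1 + x)(1 - x)⁻¹ = 2 (1 - x)⁻¹ - 1`, each of the two Herglotz kernels in `μ(θ, A)` then integrates
to `2π`, and the prefactor `1 / (4π)` gives the identity.
-/

open Real MeasureTheory intervalIntegral

theorem Continuous.ring_inverse {X R : Type*} [TopologicalSpace X] [NormedRing R]
    [CompleteSpace R] {f : X → R} (hf : Continuous f) (hunit : ∀ x, IsUnit (f x)) :
    Continuous fun x => Ring.inverse (f x) :=
  continuous_iff_continuousAt.2 fun x => by
    obtain ⟨u, hu⟩ := hunit x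
    exact (hu ▸ NormedRing.inverse_continuousAt u).comp hf.continuousAt

theorem Ring.one_add_mul_inverse_one_sub {R : Type*} [Ring R] {x : R} (hx : IsUnit (1 - x)) :
    (1 + x) * Ring.inverse (1 - x) = 2 * Ring.inverse (1 - x) - 1 := by
  rw [show 1 + x = 2 - (1 - x) by rw [← one_add_one_eq_two]; abel, sub_mul,
    Ring.mul_inverse_cancel _ hx]

theorem integral_exp_int_mul_mul_I {m : ℤ} (hm : m ≠ 0) :
    ∫ θ in (0 : ℝ)..2 * π, exp (m * θ * I) = 0 := by
  have hmI : (m : ℂ) * I ≠ 0 := mul_ne_zero (by exact_mod_cast hm) I_ne_zero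
  have hperiod : exp (m * I * ((2 * π : ℝ) : ℂ)) = 1 := by
    rw [← exp_int_mul_two_pi_mul_I m]; push_cast; ring_nf
  simp_rw [mul_right_comm (m : ℂ) _ I]
  rw [integral_exp_mul_complex hmI, hperiod]
  simp

section UnitCircle

variable {E : Type*} [NormedRing E] [NormedAlgebra ℂ E]

theorem norm_exp_int_mul_mul_I_smul (k : ℤ) (θ : ℝ) (D : E) :
    ‖exp (k * θ * I) • D‖ = ‖D‖ := by
  rw [norm_smul, show (k : ℂ) * θ * I = ((k * θ : ℝ) : ℂ) * I by push_cast; ring,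
    norm_exp_ofReal_mul_I, one_mul]

theorem exp_int_mul_mul_I_smul_pow (k : ℤ) (θ : ℝ) (D : E) (n : ℕ) :
    (exp (k * θ * I) • D) ^ n = exp ((k * n : ℤ) * θ * I) • D ^ n := by
  rw [smul_pow, ← Complex.exp_nat_mul]; push_cast; ring_nf

theorem integral_pow_exp_int_mul_mul_I_smul [CompleteSpace E] {k : ℤ} (hk : k ≠ 0) (D : E)
    (n : ℕ) :
    ∫ θ in (0 : ℝ)..2 * π, (exp (k * θ * I) • D) ^ n = if n = 0 then (2 * π : ℂ) • 1 else 0 := by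
  rcases eq_or_ne n 0 with rfl | hn
  · simp [← Complex.coe_smul]
  simp_rw [exp_int_mul_mul_I_smul_pow, intervalIntegral.integral_smul_const, if_neg hn,
    integral_exp_int_mul_mul_I (mul_ne_zero hk (Nat.cast_ne_zero.2 hn)), zero_smul]

theorem integral_inverse_one_sub_exp_int_mul_mul_I_smul [CompleteSpace E] {k : ℤ} (hk : k ≠ 0)
    {D : E} (hD : ‖D‖ < 1) :
    ∫ θ in (0 : ℝ)..2 * π, Ring.inverse (1 - exp (k * θ * I) • D) = (2 * π : ℂ) • 1 := by
  have hseries : HasSum (fun n : ℕ => ∫ θ in (0 : ℝ)..2 * π, (exp (k * θ * I) • D) ^ n)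
      (∫ θ in (0 : ℝ)..2 * π, Ring.inverse (1 - exp (k * θ * I) • D)) := by
    refine hasSum_integral_of_dominated_convergence (fun n _ => ‖D ^ n‖)
      (fun n => (by fun_prop : Continuous _).aestronglyMeasurable) ?_ ?_ intervalIntegrable_const ?_
    · refine fun n => ae_of_all _ fun θ _ => ?_
      rw [exp_int_mul_mul_I_smul_pow, norm_exp_int_mul_mul_I_smul]
    · exact ae_of_all _ fun _ _ => summable_norm_geometric_of_norm_lt_one hD
    · refine ae_of_all _ fun θ _ => hasSum_geom_series_inverse _ ?_
      rwa [norm_exp_int_mul_mul_I_smul]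
  simp only [integral_pow_exp_int_mul_mul_I_smul hk] at hseries
  exact hseries.unique (hasSum_ite_eq 0 _)

theorem continuous_inverse_one_sub_exp_int_mul_mul_I_smul [CompleteSpace E] (k : ℤ) {D : E}
    (hD : ‖D‖ < 1) : Continuous fun θ : ℝ => Ring.inverse (1 - exp (k * θ * I) • D) :=
  Continuous.ring_inverse (by fun_prop) fun θ =>
    isUnit_one_sub_of_norm_lt_one (by rwa [norm_exp_int_mul_mul_I_smul])

noncomputable def herglotzKernel (k : ℤ) (D : E) (θ : ℝ) : E :=
  (1 + exp (k * θ * I) • D) * Ring.inverse (1 - exp (k * θ * I) • D)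

theorem continuous_herglotzKernel [CompleteSpace E] (k : ℤ) {D : E} (hD : ‖D‖ < 1) :
    Continuous (herglotzKernel k D) :=
  (by fun_prop : Continuous fun θ : ℝ => 1 + exp (k * θ * I) • D).mul
    (continuous_inverse_one_sub_exp_int_mul_mul_I_smul k hD)

theorem integral_herglotzKernel [CompleteSpace E] {k : ℤ} (hk : k ≠ 0) {D : E} (hD : ‖D‖ < 1) :
    ∫ θ in (0 : ℝ)..2 * π, herglotzKernel k D θ = (2 * π : ℂ) • 1 := by
  have hunit : ∀ θ : ℝ, IsUnit (1 - exp (k * θ * I) • D) := fun θ =>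
    isUnit_one_sub_of_norm_lt_one (by rwa [norm_exp_int_mul_mul_I_smul])
  have hint := (continuous_inverse_one_sub_exp_int_mul_mul_I_smul k hD).intervalIntegrable
    (μ := volume) 0 (2 * π)
  simp_rw [herglotzKernel, Ring.one_add_mul_inverse_one_sub (hunit _), two_mul (Ring.inverse _)]
  rw [integral_sub (hint.add hint) intervalIntegrable_const, integral_add hint hint,
    integral_inverse_one_sub_exp_int_mul_mul_I_smul hk hD, intervalIntegral.integral_const,
    sub_zero, ← Complex.coe_smul]
  push_cast
  abel

end UnitCircle

theorem norm_one_div_smul_lt_one {F : Type*} [SeminormedAddCommGroup F] [NormedSpace ℂ F]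
    {B : F} {R : ℝ} (hB : ‖B‖ < R) : ‖((1 / R : ℝ) : ℂ) • B‖ < 1 := by
  have hR : 0 < R := (norm_nonneg B).trans_lt hB
  rw [norm_smul, norm_real, Real.norm_of_nonneg (by positivity), one_div, inv_mul_lt_one₀ hR]
  exact hB

theorem muOp_eq_smul_herglotzKernel {H : Type*} [NormedAddCommGroup H] [InnerProductSpace ℂ H]
    [CompleteSpace H] (r θ : ℝ) (A : H →L[ℂ] H) :
    muOp r θ A = ((4 * π : ℝ) : ℂ)⁻¹ • (herglotzKernel (-1) ((r : ℂ) • A) θ +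
      herglotzKernel 1 ((r : ℂ) • ContinuousLinearMap.adjoint A) θ) := by
  simp only [muOp, herglotzKernel, Int.cast_neg, Int.cast_one, neg_one_mul, one_mul]

theorem stmt_10_general {H : Type*} [NormedAddCommGroup H] [InnerProductSpace ℂ H] [CompleteSpace H]
    (A : H →L[ℂ] H) (R : ℝ) (hA : ‖A‖ < R) (r : ℝ) (hr : r = 1 / R) :
    ∫ θ in (0 : ℝ)..(2 * Real.pi), muOp r θ A = (1 : H →L[ℂ] H) := by
  subst hr
  have hD₁ : ‖((1 / R : ℝ) : ℂ) • A‖ < 1 := norm_one_div_smul_lt_one hA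
  have hD₂ : ‖((1 / R : ℝ) : ℂ) • ContinuousLinearMap.adjoint A‖ < 1 :=
    norm_one_div_smul_lt_one (by rwa [LinearIsometryEquiv.norm_map])
  have hint₁ := (continuous_herglotzKernel (-1) hD₁).intervalIntegrable (μ := volume) 0 (2 * π)
  have hint₂ := (continuous_herglotzKernel 1 hD₂).intervalIntegrable (μ := volume) 0 (2 * π)
  have hscalar : ((4 * π : ℝ) : ℂ)⁻¹ * (2 * π + 2 * π) = 1 := by
    have : (π : ℂ) ≠ 0 := ofReal_ne_zero.2 pi_ne_zero
    push_cast
    field_simp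
    ring
  simp_rw [muOp_eq_smul_herglotzKernel]
  rw [intervalIntegral.integral_smul, integral_add hint₁ hint₂,
    integral_herglotzKernel (by decide) hD₁, integral_herglotzKernel one_ne_zero hD₂, ← add_smul,
    smul_smul, hscalar, one_smul]

theorem stmt_10 {H : Type*} [NormedAddCommGroup H] [InnerProductSpace ℂ H] [CompleteSpace H]
    (A : H →L[ℂ] H) (R : ℝ) (hR : 0 < R) (hA : ‖A‖ < R) (r : ℝ) (hr : r = 1 / R) :
    ∫ θ in (0 : ℝ)..(2 * Real.pi), muOp r θ A = (1 : H →L[ℂ] H) :=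
  stmt_10_general A R hA r hr
end

section
/- Let R > 1 and r = 1/R, and let G be a self-adjoint bounded operator on a complex Hilbert space with r·I ≤ G ≤ R·I. Then ‖G⁻¹ + G − ((R + r + 2)/2)·I‖ ≤ (R + r − 2)/2. -/
/-! By the continuous functional calculus, `G⁻¹ + G - c` is `f(G)` for `f x = x⁻¹ + x - c`, so its
norm is bounded by the supremum of `|f|` over `σ(G) ⊆ [r, R]`. On that interval `x⁻¹ + x` ranges
between `2` (at `x = 1`) and `R + r` (at the endpoints, since `r R = 1`), and
`c = (R + r + 2) / 2` is the midpoint of this range. -/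

theorem two_le_inv_add_self {x : ℝ} (hx : 0 < x) : 2 ≤ x⁻¹ + x := by
  refine le_of_mul_le_mul_left ?_ hx
  rw [mul_add, mul_inv_cancel₀ hx.ne']
  nlinarith [sq_nonneg (x - 1)]

theorem inv_add_self_le_of_mem_Icc {r R x : ℝ} (hrR : r * R = 1) (hr : 0 < r) (hrx : r ≤ x)
    (hxR : x ≤ R) : x⁻¹ + x ≤ R + r := by
  have hx : 0 < x := hr.trans_le hrx
  refine le_of_mul_le_mul_left ?_ hx
  rw [mul_add, mul_inv_cancel₀ hx.ne']
  nlinarith [mul_nonneg (sub_nonneg.2 hrx) (sub_nonneg.2 hxR)]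

theorem abs_inv_add_self_sub_le {r R x : ℝ} (hrR : r * R = 1) (hr : 0 < r) (hrx : r ≤ x)
    (hxR : x ≤ R) : |x⁻¹ + x - (R + r + 2) / 2| ≤ (R + r - 2) / 2 := by
  have h_two_le := two_le_inv_add_self (hr.trans_le hrx)
  have h_le := inv_add_self_le_of_mem_Icc hrR hr hrx hxR
  rw [abs_le]
  constructor <;> linarith

section CStarAlgebra

variable {A : Type*} [CStarAlgebra A] [PartialOrder A] [StarOrderedRing A]

theorem norm_ringInverse_add_self_sub_le {a : A} (ha : IsSelfAdjoint a) {r R : ℝ}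
    (hrR : r * R = 1) (hr : 0 < r) (hra : algebraMap ℝ A r ≤ a) (haR : a ≤ algebraMap ℝ A R) :
    ‖Ring.inverse a + a - algebraMap ℝ A ((R + r + 2) / 2)‖ ≤ (R + r - 2) / 2 := by
  have h_spec : ∀ x ∈ spectrum ℝ a, r ≤ x ∧ x ≤ R := fun x hx =>
    ⟨(algebraMap_le_iff_le_spectrum ha).mp hra x hx,
      (le_algebraMap_iff_spectrum_le ha).mp haR x hx⟩
  have h_ne : ∀ x ∈ spectrum ℝ a, x ≠ 0 := fun x hx => (hr.trans_le (h_spec x hx).1).ne'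
  have h_inv_cont : ContinuousOn (fun x : ℝ => x⁻¹) (spectrum ℝ a) :=
    continuousOn_inv₀.mono h_ne
  have h_inv : cfc (fun x : ℝ => x⁻¹) a = Ring.inverse a :=
    (cfc_inv id a h_ne).trans (congrArg Ring.inverse (cfc_id ℝ a))
  have h_cfc : Ring.inverse a + a - algebraMap ℝ A ((R + r + 2) / 2) =
      cfc (fun x : ℝ => x⁻¹ + x - (R + r + 2) / 2) a := by
    rw [cfc_sub (a := a) (fun x : ℝ => x⁻¹ + x) (fun _ => (R + r + 2) / 2),
      cfc_add (a := a) (fun x : ℝ => x⁻¹) (fun x => x), h_inv, cfc_id' ℝ a,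
      cfc_const _ a]
  rw [h_cfc]
  refine norm_cfc_le ?_ fun x hx => ?_
  · have h_two_le := two_le_inv_add_self hr
    rw [← eq_inv_of_mul_eq_one_right hrR] at h_two_le
    linarith
  · exact abs_inv_add_self_sub_le hrR hr (h_spec x hx).1 (h_spec x hx).2

end CStarAlgebra

theorem stmt_16 {H : Type*} [NormedAddCommGroup H] [InnerProductSpace ℂ H] [CompleteSpace H]
    (R : ℝ) (hR : 1 < R) (r : ℝ) (hr : r = 1 / R)
    (G : H →L[ℂ] H) (hG : IsSelfAdjoint G)
    (hGl : (G - (r : ℂ) • (1 : H →L[ℂ] H)).IsPositive)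
    (hGu : ((R : ℂ) • (1 : H →L[ℂ] H) - G).IsPositive) :
    ‖Ring.inverse G + G - (((R + r + 2) / 2 : ℝ) : ℂ) • (1 : H →L[ℂ] H)‖ ≤
      (R + r - 2) / 2 := by
  have hr0 : 0 < r := hr ▸ one_div_pos.mpr (zero_lt_one.trans hR)
  have hrR : r * R = 1 := by rw [hr]; field_simp
  have h_smul (c : ℝ) : (c : ℂ) • (1 : H →L[ℂ] H) = algebraMap ℝ (H →L[ℂ] H) c := by
    rw [Algebra.algebraMap_eq_smul_one, Complex.coe_smul]
  rw [h_smul] at hGl hGu ⊢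
  exact norm_ringInverse_add_self_sub_le hG hrR hr0 hGl hGu
end
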